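/- arXiv:2412.03120 — 2 statements merged into one kernel-verified Lean document; each statement's English description precedes it below -/
import Mathlib

section
/- Exponential convergence of the Sinkhorn iteration for general M ≥ 2: let (û^(i))_{i=1}^{M+1} be a dual-optimal tuple, and set E := max_{i≤M} λ(K^(i)) and e := max_{i≤M+1} d_H(u^(0,i), û^(i)). Then for every n ∈ ℕ and every i = 1,…,M+1: d_H(u^(n,i), û^(i)) ≤ E^n·e. -/
open Matrix Finset Real

noncomputable section

/- Throughout, the number of composed transport plans is `M = N + 2` for `N : ℕ`, which
exactly captures the assumption `M ≥ 2`.  Vectors are indexed by `1, …, M + 1 = N + 3`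
and matrices by `1, …, M = N + 2`. -/

/-- Componentwise (Frobenius) inner product `⟨X, Y⟩ = Σ_{j,k} X_{jk} Y_{jk}`. -/
def frob {m n : ℕ} (X Y : Matrix (Fin m) (Fin n) ℝ) : ℝ := ∑ j, ∑ k, X j k * Y j k

/-- The entropy `H(P) = −Σ_{j,k} P_{jk} (log P_{jk} − 1)` (with `0·log 0 = 0`,
as is the case for `Real.log`). -/
def ent {m n : ℕ} (P : Matrix (Fin m) (Fin n) ℝ) : ℝ :=
  -∑ j, ∑ k, P j k * (Real.log (P j k) - 1)

/-- Feasibility of a tuple of transportation plans for the sequentially composed OT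
problem with `M = N + 2`: the first marginal is `a`, the last is `b`, and consecutive
plans are consistent on the boundaries. -/
def FeasibleT (N : ℕ) (m : ℕ → ℕ)
    (a : Fin (m 1) → ℝ) (b : Fin (m (N+3)) → ℝ)
    (P : ∀ i : ℕ, Matrix (Fin (m i)) (Fin (m (i+1))) ℝ) : Prop :=
  (P 1 *ᵥ fun _ => 1) = a ∧ ((P (N+2))ᵀ *ᵥ fun _ => 1) = b ∧
    ∀ i : ℕ, 1 ≤ i → i ≤ N + 1 → ((P i)ᵀ *ᵥ fun _ => 1) = (P (i+1) *ᵥ fun _ => 1)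

/-- Entrywise nonnegativity of a tuple of matrices, for the relevant indices `1, …, N+2`. -/
def NonnegT (N : ℕ) (m : ℕ → ℕ)
    (P : ∀ i : ℕ, Matrix (Fin (m i)) (Fin (m (i+1))) ℝ) : Prop :=
  ∀ i : ℕ, 1 ≤ i → i ≤ N + 2 → ∀ j k, 0 ≤ P i j k

/-- The regularized primal objective `Σ_{i=1}^{M} (⟨C⁽ⁱ⁾, P⁽ⁱ⁾⟩ − ε H(P⁽ⁱ⁾))`. -/
def primalVal (N : ℕ) (m : ℕ → ℕ)
    (C : ∀ i : ℕ, Matrix (Fin (m i)) (Fin (m (i+1))) ℝ) (ε : ℝ)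
    (P : ∀ i : ℕ, Matrix (Fin (m i)) (Fin (m (i+1))) ℝ) : ℝ :=
  ∑ i ∈ Finset.Icc 1 (N+2), (frob (C i) (P i) - ε * ent (P i))

/-- The dual function `L((f⁽ⁱ⁾)_{i=1}^{M+1})` of the regularized sequentially composed OT
problem with `M = N + 2`. -/
def dualGen (N : ℕ) (m : ℕ → ℕ)
    (C : ∀ i : ℕ, Matrix (Fin (m i)) (Fin (m (i+1))) ℝ)
    (a : Fin (m 1) → ℝ) (b : Fin (m (N+3)) → ℝ) (ε : ℝ)
    (f : ∀ i : ℕ, Fin (m i) → ℝ) : ℝ :=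
  (∑ j, f 1 j * a j) + (∑ k, f (N+3) k * b k)
    - ε * ((∑ j, ∑ k, Real.exp ((f (N+2) j + f (N+3) k - C (N+2) j k) / ε))
      + ∑ i ∈ Finset.Icc 1 (N+1), ∑ j, ∑ k, Real.exp ((f i j - f (i+1) k - C i j k) / ε))

/-- The Hilbert projective (pseudo)metric on the positive orthant. -/
def dH {m : ℕ} (u v : Fin m → ℝ) : ℝ :=
  Real.log ((⨆ i, u i / v i) * (⨆ j, v j / u j))

/-- Birkhoff's ratio `γ(A)`. -/
def birkhoffGamma {n m : ℕ} (A : Matrix (Fin n) (Fin m) ℝ) : ℝ :=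
  ⨆ p : (Fin n × Fin n) × Fin m × Fin m,
    A p.1.1 p.2.1 * A p.1.2 p.2.2 / (A p.1.2 p.2.1 * A p.1.1 p.2.2)

/-- Birkhoff's contraction coefficient `λ(A) = (√γ(A) − 1)/(√γ(A) + 1)`. -/
def birkhoffLambda {n m : ℕ} (A : Matrix (Fin n) (Fin m) ℝ) : ℝ :=
  (Real.sqrt (birkhoffGamma A) - 1) / (Real.sqrt (birkhoffGamma A) + 1)


/-!
A dual optimizer `û` is a fixed point of the Sinkhorn sweep: the first-order conditions of the
concave dual function say that the plans `diag(û⁽ⁱ⁾) K⁽ⁱ⁾ diag(û⁽ⁱ⁺¹⁾)^{∓1}` have the prescribed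
marginals, which are exactly the Sinkhorn updates with `û` on both sides. A sweep is composed of
the maps `u ↦ K u`, `u ↦ 1/u`, `u ↦ c/u` and `(u, v) ↦ √(u/v)`. In the Hilbert metric the first
contracts by Birkhoff's coefficient `λ(K)` (Birkhoff–Hopf theorem), the next two are isometries,
and the last is bounded by the mean of the two distances. So the interior updates are `E`-Lipschitz
for the largest distance over the indices, the two end updates do not increase the distance of
their neighbour, and induction over the sweeps gives `Eⁿ e`.
-/

section HilbertMetric

variable {n : ℕ} {u v : Fin n → ℝ}

lemma le_iSup_fin (f : Fin n → ℝ) (j : Fin n) : f j ≤ ⨆ i, f i :=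
  le_ciSup (Finite.bddAbove_range f) j

lemma ratio_mul_ratio_le_exp_dH (hu : ∀ j, 0 < u j) (hv : ∀ j, 0 < v j) (j j' : Fin n) :
    u j / v j * (v j' / u j') ≤ Real.exp (dH u v) := by
  have hsup : ∀ (w w' : Fin n → ℝ) (j : Fin n), w j / w' j ≤ ⨆ i, w i / w' i :=
    fun w w' => le_iSup_fin fun i => w i / w' i
  rw [dH, Real.exp_log (mul_pos ((div_pos (hu j) (hv j)).trans_le (hsup u v j))
    ((div_pos (hv j) (hu j)).trans_le (hsup v u j)))]
  exact mul_le_mul (hsup u v j) (hsup v u j') (div_pos (hv j') (hu j')).le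
    ((div_pos (hu j) (hv j)).le.trans (hsup u v j))

lemma dH_le_log_of_forall [NeZero n] (hu : ∀ j, 0 < u j) (hv : ∀ j, 0 < v j) {R : ℝ}
    (h : ∀ j j', u j / v j * (v j' / u j') ≤ R) : dH u v ≤ Real.log R := by
  have hsup_pos : ∀ (w w' : Fin n → ℝ), (∀ j, 0 < w j) → (∀ j, 0 < w' j) →
      0 < ⨆ j, w j / w' j := fun w w' hw hw' =>
    (div_pos (hw 0) (hw' 0)).trans_le (le_iSup_fin (fun j => w j / w' j) 0)
  refine Real.log_le_log (mul_pos (hsup_pos u v hu hv) (hsup_pos v u hv hu)) ?_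
  rw [Real.iSup_mul_of_nonneg (hsup_pos v u hv hu).le]
  refine ciSup_le fun j => ?_
  rw [Real.mul_iSup_of_nonneg (div_pos (hu j) (hv j)).le]
  exact ciSup_le (h j)

lemma dH_nonneg [NeZero n] (hu : ∀ j, 0 < u j) (hv : ∀ j, 0 < v j) : 0 ≤ dH u v := by
  rw [← Real.one_le_exp_iff]
  calc (1 : ℝ) = u 0 / v 0 * (v 0 / u 0) := by field_simp [(hu 0).ne', (hv 0).ne']
    _ ≤ _ := ratio_mul_ratio_le_exp_dH hu hv 0 0

lemma dH_comm (u v : Fin n → ℝ) : dH u v = dH v u := by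
  rw [dH, dH, mul_comm]

lemma dH_div_left {c : Fin n → ℝ} (hc : ∀ j, 0 < c j) (hu : ∀ j, 0 < u j)
    (hv : ∀ j, 0 < v j) : dH (fun j => c j / u j) (fun j => c j / v j) = dH u v := by
  have h : ∀ (w w' : Fin n → ℝ), (∀ j, 0 < w j) → (∀ j, 0 < w' j) →
      ∀ j, c j / w j / (c j / w' j) = w' j / w j := fun w w' hw hw' j => by
    field_simp [(hc j).ne', (hw j).ne', (hw' j).ne']
  rw [dH_comm u v, dH, dH, iSup_congr (h u v hu hv), iSup_congr (h v u hv hu)]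

lemma dH_inv (hu : ∀ j, 0 < u j) (hv : ∀ j, 0 < v j) :
    dH (fun j => (u j)⁻¹) (fun j => (v j)⁻¹) = dH u v := by
  simpa only [one_div] using dH_div_left (c := fun _ => 1) (fun _ => one_pos) hu hv

lemma dH_sqrt_le [NeZero n] (hu : ∀ j, 0 < u j) (hv : ∀ j, 0 < v j) :
    dH (fun j => √(u j)) (fun j => √(v j)) ≤ dH u v / 2 := by
  refine (dH_le_log_of_forall (fun j => Real.sqrt_pos.2 (hu j)) (fun j => Real.sqrt_pos.2 (hv j))
    fun j j' => ?_).trans_eq (Real.log_exp _)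
  rw [Real.exp_half, ← Real.sqrt_div (hu j).le, ← Real.sqrt_div (hv j').le,
    ← Real.sqrt_mul (div_pos (hu j) (hv j)).le]
  exact Real.sqrt_le_sqrt (ratio_mul_ratio_le_exp_dH hu hv j j')

lemma dH_div_le [NeZero n] {u' v' : Fin n → ℝ} (hu : ∀ j, 0 < u j) (hv : ∀ j, 0 < v j)
    (hu' : ∀ j, 0 < u' j) (hv' : ∀ j, 0 < v' j) :
    dH (fun j => u j / v j) (fun j => u' j / v' j) ≤ dH u u' + dH v v' := by
  refine (dH_le_log_of_forall (R := Real.exp (dH u u') * Real.exp (dH v v'))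
    (fun j => div_pos (hu j) (hv j)) (fun j => div_pos (hu' j) (hv' j)) fun j j' => ?_).trans_eq
    (by rw [← Real.exp_add, Real.log_exp])
  calc u j / v j / (u' j / v' j) * (u' j' / v' j' / (u j' / v j'))
      = u j / u' j * (u' j' / u j') * (v j' / v' j' * (v' j / v j)) := by
        field_simp [(hu j).ne', (hv j).ne', (hu' j).ne', (hv' j).ne', (hu j').ne', (hv j').ne',
          (hu' j').ne', (hv' j').ne']
    _ ≤ Real.exp (dH u u') * Real.exp (dH v v') :=
        mul_le_mul (ratio_mul_ratio_le_exp_dH hu hu' j j') (ratio_mul_ratio_le_exp_dH hv hv' j' j)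
          (mul_pos (div_pos (hv j') (hv' j')) (div_pos (hv' j) (hv j))).le (Real.exp_pos _).le

end HilbertMetric

section Birkhoff

variable {n p : ℕ} {A : Matrix (Fin n) (Fin p) ℝ}

lemma mulVec_pos [NeZero p] (hA : ∀ j k, 0 < A j k) {u : Fin p → ℝ} (hu : ∀ k, 0 < u k)
    (j : Fin n) : 0 < (A *ᵥ u) j :=
  Finset.sum_pos (fun k _ => mul_pos (hA j k) (hu k)) Finset.univ_nonempty

lemma mul_le_birkhoffGamma_mul (hA : ∀ j k, 0 < A j k) (j j' : Fin n) (k l : Fin p) :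
    A j k * A j' l ≤ birkhoffGamma A * (A j' k * A j l) := by
  rw [← div_le_iff₀ (mul_pos (hA j' k) (hA j l))]
  exact le_ciSup (f := fun q : (Fin n × Fin n) × Fin p × Fin p =>
    A q.1.1 q.2.1 * A q.1.2 q.2.2 / (A q.1.2 q.2.1 * A q.1.1 q.2.2))
    (Finite.bddAbove_range _) ((j, j'), (k, l))

lemma one_le_birkhoffGamma [NeZero n] [NeZero p] (hA : ∀ j k, 0 < A j k) :
    1 ≤ birkhoffGamma A :=
  le_of_mul_le_mul_right (by simpa using mul_le_birkhoffGamma_mul hA 0 0 0 0)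
    (mul_pos (hA 0 0) (hA 0 0))

lemma birkhoffGamma_transpose (A : Matrix (Fin n) (Fin p) ℝ) :
    birkhoffGamma Aᵀ = birkhoffGamma A := by
  rw [birkhoffGamma, birkhoffGamma,
    ← (Equiv.prodComm (Fin p × Fin p) (Fin n × Fin n)).iSup_comp]
  simp only [Equiv.prodComm_apply, Prod.fst_swap, Prod.snd_swap, transpose_apply, mul_comm]

lemma birkhoffLambda_transpose (A : Matrix (Fin n) (Fin p) ℝ) :
    birkhoffLambda Aᵀ = birkhoffLambda A := by
  rw [birkhoffLambda, birkhoffLambda, birkhoffGamma_transpose]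

lemma birkhoffLambda_nonneg [NeZero n] [NeZero p] (hA : ∀ j k, 0 < A j k) :
    0 ≤ birkhoffLambda A := by
  have := Real.one_le_sqrt.2 (one_le_birkhoffGamma hA)
  exact div_nonneg (by linarith) (by linarith)

lemma birkhoffLambda_le_one (A : Matrix (Fin n) (Fin p) ℝ) : birkhoffLambda A ≤ 1 :=
  div_le_one_of_le₀ (by linarith) (by positivity)

end Birkhoff

section BirkhoffHopf

/-- Birkhoff's inequality for a vector taking only the values `b²` and `a²`, with weights `p, q`
in one row and `p', q'` in the other. -/
lemma two_point_ratio_le {a b c p q p' q' : ℝ} (ha : 0 < a) (hab : a ≤ b) (hc : 1 ≤ c)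
    (hp : 0 ≤ p) (hq : 0 ≤ q) (hp' : 0 ≤ p') (hq' : 0 ≤ q')
    (hpq : p * q' ≤ c ^ 2 * (q * p')) :
    (b ^ 2 * p + a ^ 2 * q) * (p' + q') * (b + c * a) ^ 2
      ≤ (p + q) * (b ^ 2 * p' + a ^ 2 * q') * (c * b + a) ^ 2 := by
  set X := √(p * q')
  set Y := √(q * p')
  set Z := √(p * p')
  set W := √(q * q')
  have hX : X ^ 2 = p * q' := Real.sq_sqrt (by positivity)
  have hY : Y ^ 2 = q * p' := Real.sq_sqrt (by positivity)
  have hZ : Z ^ 2 = p * p' := Real.sq_sqrt (by positivity)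
  have hW : W ^ 2 = q * q' := Real.sq_sqrt (by positivity)
  have hZW : Z * W = X * Y := by
    simp only [X, Y, Z, W, ← Real.sqrt_mul (mul_nonneg hp hp'),
      ← Real.sqrt_mul (mul_nonneg hp hq')]
    ring_nf
  have hXY : X ≤ c * Y := by
    rw [← Real.sqrt_sq (by positivity : 0 ≤ c), ← Real.sqrt_mul (sq_nonneg c)]
    exact Real.sqrt_le_sqrt hpq
  have key : (p + q) * (b ^ 2 * p' + a ^ 2 * q') * (c * b + a) ^ 2
      - (b ^ 2 * p + a ^ 2 * q) * (p' + q') * (b + c * a) ^ 2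
      = (b ^ 2 - a ^ 2) * ((c * Y - X) * ((a ^ 2 + b ^ 2 + 2 * a * b * c) * X
          + (c * (a ^ 2 + b ^ 2) + 2 * a * b) * Y) + (c ^ 2 - 1) * (b * Z - a * W) ^ 2) := by
    linear_combination (b ^ 2 - a ^ 2) * ((a ^ 2 + b ^ 2 + 2 * a * b * c) * hX
      - (c ^ 2 * (a ^ 2 + b ^ 2) + 2 * a * b * c) * hY - (c ^ 2 - 1) * b ^ 2 * hZ
      - (c ^ 2 - 1) * a ^ 2 * hW + 2 * a * b * (c ^ 2 - 1) * hZW)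
  have hb : 0 < b := ha.trans_le hab
  have hba : 0 ≤ b ^ 2 - a ^ 2 := by nlinarith
  have hc2 : 0 ≤ c ^ 2 - 1 := by nlinarith
  rw [← sub_nonneg, key]
  refine mul_nonneg hba (add_nonneg (mul_nonneg (by linarith) ?_) (by positivity))
  positivity

variable {p : ℕ} {w w' : Fin p → ℝ} {c : ℝ}

lemma sum_mul_sum_le_of_cross (hcross : ∀ k l, w k * w' l ≤ c ^ 2 * (w' k * w l))
    {s t : Fin p → ℝ} (hs : ∀ k, 0 ≤ s k) (ht : ∀ k, 0 ≤ t k) :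
    (∑ k, w k * s k) * (∑ l, w' l * t l) ≤ c ^ 2 * ((∑ l, w l * t l) * (∑ k, w' k * s k)) := by
  rw [mul_comm (∑ l, w l * t l), Finset.sum_mul_sum, Finset.sum_mul_sum, Finset.mul_sum]
  refine Finset.sum_le_sum fun k _ => ?_
  rw [Finset.mul_sum]
  refine Finset.sum_le_sum fun l _ => ?_
  calc w k * s k * (w' l * t l) = w k * w' l * (s k * t l) := by ring
    _ ≤ c ^ 2 * (w' k * w l) * (s k * t l) :=
        mul_le_mul_of_nonneg_right (hcross k l) (mul_nonneg (hs k) (ht l))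
    _ = c ^ 2 * (w' k * s k * (w l * t l)) := by ring

lemma two_row_ratio_le {r : Fin p → ℝ} {a b : ℝ} (ha : 0 < a) (hab : a ≤ b) (hc : 1 ≤ c)
    (hw : ∀ k, 0 ≤ w k) (hw' : ∀ k, 0 ≤ w' k)
    (hcross : ∀ k l, w k * w' l ≤ c ^ 2 * (w' k * w l)) (hr : ∀ k, a ^ 2 ≤ r k ∧ r k ≤ b ^ 2) :
    (∑ k, w k * r k) * (∑ k, w' k) * (b + c * a) ^ 2
      ≤ (∑ k, w k) * (∑ k, w' k * r k) * (c * b + a) ^ 2 := by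
  rcases hab.eq_or_lt with rfl | hlt
  · have hr' : ∀ k, r k = a ^ 2 := fun k => le_antisymm (hr k).2 (hr k).1
    simp only [hr', ← Finset.sum_mul]
    exact le_of_eq (by ring)
  have hlow : ∀ k, 0 ≤ r k - a ^ 2 := fun k => sub_nonneg.2 (hr k).1
  have hup : ∀ k, 0 ≤ b ^ 2 - r k := fun k => sub_nonneg.2 (hr k).2
  -- Splitting each weight along `r k = ((r k - a²) b² + (b² - r k) a²) / (b² - a²)` reduces
  -- the claim to `two_point_ratio_le`.
  have hsplit : ∀ v : Fin p → ℝ,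
      (b ^ 2 - a ^ 2) * ∑ k, v k * r k
        = b ^ 2 * ∑ k, v k * (r k - a ^ 2) + a ^ 2 * ∑ k, v k * (b ^ 2 - r k) ∧
      (b ^ 2 - a ^ 2) * ∑ k, v k = (∑ k, v k * (r k - a ^ 2)) + ∑ k, v k * (b ^ 2 - r k) := by
    intro v
    simp only [Finset.mul_sum, ← Finset.sum_add_distrib]
    exact ⟨Finset.sum_congr rfl fun k _ => by ring, Finset.sum_congr rfl fun k _ => by ring⟩
  have hmain := two_point_ratio_le ha hab hc
    (Finset.sum_nonneg fun k _ => mul_nonneg (hw k) (hlow k))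
    (Finset.sum_nonneg fun k _ => mul_nonneg (hw k) (hup k))
    (Finset.sum_nonneg fun k _ => mul_nonneg (hw' k) (hlow k))
    (Finset.sum_nonneg fun k _ => mul_nonneg (hw' k) (hup k))
    (sum_mul_sum_le_of_cross hcross hlow hup)
  rw [← (hsplit w).1, ← (hsplit w).2, ← (hsplit w').1, ← (hsplit w').2] at hmain
  have hd : 0 < (b ^ 2 - a ^ 2) ^ 2 := by
    have : a ^ 2 < b ^ 2 := by gcongr
    positivity
  refine le_of_mul_le_mul_left ?_ hd
  linear_combination hmain

lemma mul_log_div_le_mul_log {c x : ℝ} (hc : 1 ≤ c) (hx : 1 ≤ x) :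
    (c + 1) * Real.log ((c * x + 1) / (x + c)) ≤ (c - 1) * Real.log x := by
  set F : ℝ → ℝ := fun y =>
    (c - 1) * Real.log y - (c + 1) * Real.log (c * y + 1) + (c + 1) * Real.log (y + c)
  have hF : ∀ y, 1 ≤ y → HasDerivAt F
      ((c - 1) * y⁻¹ - (c + 1) * (c * 1 / (c * y + 1)) + (c + 1) * (1 / (y + c))) y := by
    intro y hy
    have h₁ := (Real.hasDerivAt_log (by positivity : y ≠ 0)).const_mul (c - 1)
    have h₂ := (((hasDerivAt_id' y).const_mul c).add_const 1).log (by positivity)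
    have h₃ := ((hasDerivAt_id' y).add_const c).log (by positivity)
    exact (h₁.sub (h₂.const_mul (c + 1))).add (h₃.const_mul (c + 1))
  have hmono : MonotoneOn F (Set.Ici 1) := by
    refine monotoneOn_of_deriv_nonneg (convex_Ici 1)
      (fun y hy => (hF y hy).continuousAt.continuousWithinAt)
      (fun y hy => (hF y (interior_subset hy)).differentiableAt.differentiableWithinAt) ?_
    intro y hy
    rw [interior_Ici] at hy
    have hy0 : 0 < y := one_pos.trans hy
    rw [(hF y hy.le).deriv,
      show (c - 1) * y⁻¹ - (c + 1) * (c * 1 / (c * y + 1)) + (c + 1) * (1 / (y + c))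
        = c * (c - 1) * (y - 1) ^ 2 / (y * ((c * y + 1) * (y + c))) by field_simp; ring]
    have : 0 ≤ c - 1 := by linarith
    positivity
  have h := hmono Set.self_mem_Ici hx hx
  simp only [F, Real.log_one, mul_one, mul_zero, add_comm 1 c, zero_sub, neg_add_cancel] at h
  rw [Real.log_div (by positivity) (by positivity)]
  linarith

/-- The Birkhoff–Hopf theorem. -/
theorem dH_mulVec_le {n : ℕ} [NeZero n] [NeZero p] {A : Matrix (Fin n) (Fin p) ℝ}
    (hA : ∀ j k, 0 < A j k) {u v : Fin p → ℝ} (hu : ∀ k, 0 < u k) (hv : ∀ k, 0 < v k) :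
    dH (A *ᵥ u) (A *ᵥ v) ≤ birkhoffLambda A * dH u v := by
  set β := ⨆ k, u k / v k
  set α := (⨆ k, v k / u k)⁻¹
  have hβ : ∀ k, u k / v k ≤ β := le_iSup_fin _
  have hα : ∀ k, α ≤ u k / v k := fun k => by
    rw [← inv_div]
    exact inv_anti₀ (div_pos (hv k) (hu k)) (le_iSup_fin (fun k => v k / u k) k)
  have hα0 : 0 < α :=
    inv_pos.2 ((div_pos (hv 0) (hu 0)).trans_le (le_iSup_fin (fun k => v k / u k) 0))
  set a := √α
  set b := √β
  set c := √(birkhoffGamma A)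
  have ha : 0 < a := Real.sqrt_pos.2 hα0
  have hab : a ≤ b := Real.sqrt_le_sqrt ((hα 0).trans (hβ 0))
  have hc : 1 ≤ c := Real.one_le_sqrt.2 (one_le_birkhoffGamma hA)
  have ha2 : a ^ 2 = α := Real.sq_sqrt hα0.le
  have hb2 : b ^ 2 = β := Real.sq_sqrt (hα0.le.trans ((hα 0).trans (hβ 0)))
  have hc2 : c ^ 2 = birkhoffGamma A := Real.sq_sqrt (zero_le_one.trans (one_le_birkhoffGamma hA))
  have hpair : ∀ j j', (A *ᵥ u) j / (A *ᵥ v) j * ((A *ᵥ v) j' / (A *ᵥ u) j')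
      ≤ ((c * b + a) / (b + c * a)) ^ 2 := by
    intro j j'
    have h := two_row_ratio_le (w := fun k => A j k * v k) (w' := fun k => A j' k * v k)
      (r := fun k => u k / v k) ha hab hc (fun k => (mul_pos (hA j k) (hv k)).le)
      (fun k => (mul_pos (hA j' k) (hv k)).le)
      (fun k l => by
        rw [hc2]
        nlinarith [mul_le_birkhoffGamma_mul hA j j' k l, mul_pos (hv k) (hv l)])
      (fun k => ⟨ha2 ▸ hα k, hb2 ▸ hβ k⟩)
    have hsum : ∀ i, ∑ k, A i k * v k * (u k / v k) = (A *ᵥ u) i := fun i =>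
      Finset.sum_congr rfl fun k _ => by field_simp [(hv k).ne']
    have hsum' : ∀ i, ∑ k, A i k * v k = (A *ᵥ v) i := fun _ => rfl
    simp only [hsum, hsum'] at h
    rw [div_mul_div_comm, div_pow, div_le_div_iff₀ (mul_pos (mulVec_pos hA hv j)
      (mulVec_pos hA hu j')) (by positivity)]
    linear_combination h
  have hdHuv : dH u v = 2 * Real.log (b / a) := by
    have h : dH u v = Real.log (b ^ 2 / a ^ 2) := by
      rw [ha2, hb2, div_eq_mul_inv, inv_inv]
      rfl
    rw [h, ← div_pow, Real.log_pow, Nat.cast_ofNat]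
  have hlam : birkhoffLambda A = (c - 1) / (c + 1) := rfl
  have hratio : (c * b + a) / (b + c * a) = (c * (b / a) + 1) / (b / a + c) := by
    field_simp
  refine (dH_le_log_of_forall (mulVec_pos hA hu) (mulVec_pos hA hv) hpair).trans ?_
  rw [Real.log_pow, hratio, hdHuv, hlam, Nat.cast_ofNat, div_mul_eq_mul_div,
    le_div_iff₀ (by linarith)]
  nlinarith [mul_log_div_le_mul_log hc ((one_le_div ha).2 hab)]

end BirkhoffHopf

section SinkhornStep

variable {n p q : ℕ} [NeZero n] [NeZero p] [NeZero q]

lemma dH_sqrt_div_mulVec_le {A : Matrix (Fin n) (Fin p) ℝ} {B : Matrix (Fin n) (Fin q) ℝ}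
    (hA : ∀ j k, 0 < A j k) (hB : ∀ j k, 0 < B j k) {x x' : Fin p → ℝ} {y y' : Fin q → ℝ}
    (hx : ∀ k, 0 < x k) (hx' : ∀ k, 0 < x' k) (hy : ∀ k, 0 < y k) (hy' : ∀ k, 0 < y' k)
    {E δ : ℝ} (hAE : birkhoffLambda A ≤ E) (hBE : birkhoffLambda B ≤ E)
    (hxδ : dH x x' ≤ δ) (hyδ : dH y y' ≤ δ) :
    dH (fun j => √((A *ᵥ x) j / (B *ᵥ y) j)) (fun j => √((A *ᵥ x') j / (B *ᵥ y') j))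
      ≤ E * δ := by
  have hAx := mulVec_pos hA hx
  have hAx' := mulVec_pos hA hx'
  have hBy := mulVec_pos hB hy
  have hBy' := mulVec_pos hB hy'
  calc _ ≤ dH (fun j => (A *ᵥ x) j / (B *ᵥ y) j) (fun j => (A *ᵥ x') j / (B *ᵥ y') j) / 2 :=
        dH_sqrt_le (fun j => div_pos (hAx j) (hBy j)) (fun j => div_pos (hAx' j) (hBy' j))
    _ ≤ (dH (A *ᵥ x) (A *ᵥ x') + dH (B *ᵥ y) (B *ᵥ y')) / 2 := by
        gcongr
        exact dH_div_le hAx hBy hAx' hBy'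
    _ ≤ (birkhoffLambda A * dH x x' + birkhoffLambda B * dH y y') / 2 := by
        gcongr
        exacts [dH_mulVec_le hA hx hx', dH_mulVec_le hB hy hy']
    _ ≤ (E * δ + E * δ) / 2 := div_le_div_of_nonneg_right (add_le_add
          (mul_le_mul hAE hxδ (dH_nonneg hx hx') ((birkhoffLambda_nonneg hA).trans hAE))
          (mul_le_mul hBE hyδ (dH_nonneg hy hy') ((birkhoffLambda_nonneg hB).trans hBE)))
          zero_le_two
    _ = E * δ := by ring

lemma dH_div_mulVec_le {A : Matrix (Fin n) (Fin p) ℝ} (hA : ∀ j k, 0 < A j k)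
    {c : Fin n → ℝ} (hc : ∀ j, 0 < c j) {x x' : Fin p → ℝ} (hx : ∀ k, 0 < x k)
    (hx' : ∀ k, 0 < x' k) :
    dH (fun j => c j / (A *ᵥ x) j) (fun j => c j / (A *ᵥ x') j) ≤ dH x x' := by
  rw [dH_div_left hc (mulVec_pos hA hx) (mulVec_pos hA hx')]
  exact (dH_mulVec_le hA hx hx').trans
    (mul_le_of_le_one_left (dH_nonneg hx hx') (birkhoffLambda_le_one A))

end SinkhornStep

lemma forall_of_first_of_interior_of_last {N : ℕ} {P : ℕ → Prop} (h₁ : P 1)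
    (hint : ∀ i, 1 ≤ i → i ≤ N + 1 → P (i + 1)) (hlast : P (N + 3)) :
    ∀ i, 1 ≤ i → i ≤ N + 3 → P i := by
  intro i hi₁ hi₂
  rcases (show i = 1 ∨ (2 ≤ i ∧ i ≤ N + 2) ∨ i = N + 3 by omega) with rfl | ⟨hi₁, hi₂⟩ | rfl
  · exact h₁
  · obtain ⟨i, rfl⟩ : ∃ k, i = k + 1 := ⟨i - 1, by omega⟩
    exact hint i (by omega) (by omega)
  · exact hlast

section SinkhornUpdate

variable {N : ℕ} {m : ℕ → ℕ} [∀ i, NeZero (m i)]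
  {K : ∀ i : ℕ, Matrix (Fin (m i)) (Fin (m (i+1))) ℝ} {a : Fin (m 1) → ℝ} {b : Fin (m (N+3)) → ℝ}
  {v w v' w' : ∀ i : ℕ, Fin (m i) → ℝ}

structure IsSinkhornUpdate (N : ℕ) (m : ℕ → ℕ) (K : ∀ i : ℕ, Matrix (Fin (m i)) (Fin (m (i+1))) ℝ)
    (a : Fin (m 1) → ℝ) (b : Fin (m (N+3)) → ℝ) (v w : ∀ i : ℕ, Fin (m i) → ℝ) : Prop where
  mid : ∀ i, 1 ≤ i → i ≤ N →
    w (i+1) = fun j => √(((K i)ᵀ *ᵥ v i) j / (K (i+1) *ᵥ fun k => (v (i+2) k)⁻¹) j)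
  penultimate : w (N+2) = fun j => √(((K (N+1))ᵀ *ᵥ v (N+1)) j / (K (N+2) *ᵥ v (N+3)) j)
  first : w 1 = fun j => a j / (K 1 *ᵥ fun k => (w 2 k)⁻¹) j
  last : w (N+3) = fun k => b k / ((K (N+2))ᵀ *ᵥ w (N+2)) k

lemma IsSinkhornUpdate.pos (h : IsSinkhornUpdate N m K a b v w) (ha : ∀ j, 0 < a j)
    (hb : ∀ k, 0 < b k) (hK : ∀ i j k, 0 < K i j k)
    (hv : ∀ i, 1 ≤ i → i ≤ N + 3 → ∀ j, 0 < v i j) :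
    ∀ i, 1 ≤ i → i ≤ N + 3 → ∀ j, 0 < w i j := by
  have hKT : ∀ i j k, 0 < (K i)ᵀ j k := fun i j k => hK i k j
  have hint : ∀ i, 1 ≤ i → i ≤ N + 1 → ∀ j, 0 < w (i+1) j := by
    intro i hi₁ hi₂ j
    rcases hi₂.lt_or_eq with hi₂ | rfl
    · rw [h.mid i hi₁ (by omega)]
      exact Real.sqrt_pos.2 (div_pos (mulVec_pos (hKT i) (hv i hi₁ (by omega)) j)
        (mulVec_pos (hK _) (fun k => inv_pos.2 (hv (i+2) (by omega) (by omega) k)) j))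
    · rw [h.penultimate]
      exact Real.sqrt_pos.2 (div_pos (mulVec_pos (hKT _) (hv (N+1) hi₁ (by omega)) j)
        (mulVec_pos (hK _) (hv (N+3) (by omega) le_rfl) j))
  refine forall_of_first_of_interior_of_last (fun j => ?_) hint (fun k => ?_)
  · rw [h.first]
    exact div_pos (ha j) (mulVec_pos (hK 1) (fun k => inv_pos.2 (hint 1 le_rfl (by omega) k)) j)
  · rw [h.last]
    exact div_pos (hb k) (mulVec_pos (hKT _) (hint (N+1) (by omega) le_rfl) k)

lemma IsSinkhornUpdate.dH_le (h : IsSinkhornUpdate N m K a b v w)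
    (h' : IsSinkhornUpdate N m K a b v' w') (ha : ∀ j, 0 < a j) (hb : ∀ k, 0 < b k)
    (hK : ∀ i j k, 0 < K i j k) (hv : ∀ i, 1 ≤ i → i ≤ N + 3 → ∀ j, 0 < v i j)
    (hv' : ∀ i, 1 ≤ i → i ≤ N + 3 → ∀ j, 0 < v' i j) {E δ : ℝ}
    (hE : ∀ i, 1 ≤ i → i ≤ N + 2 → birkhoffLambda (K i) ≤ E)
    (hδ : ∀ i, 1 ≤ i → i ≤ N + 3 → dH (v i) (v' i) ≤ δ) :
    ∀ i, 1 ≤ i → i ≤ N + 3 → dH (w i) (w' i) ≤ E * δ := by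
  have hw := h.pos ha hb hK hv
  have hw' := h'.pos ha hb hK hv'
  have hKT : ∀ i j k, 0 < (K i)ᵀ j k := fun i j k => hK i k j
  have hET : ∀ i, 1 ≤ i → i ≤ N + 2 → birkhoffLambda (K i)ᵀ ≤ E := fun i hi₁ hi₂ =>
    (birkhoffLambda_transpose _).trans_le (hE i hi₁ hi₂)
  have hinv : ∀ {x : ∀ i : ℕ, Fin (m i) → ℝ}, (∀ i, 1 ≤ i → i ≤ N + 3 → ∀ j, 0 < x i j) →
      ∀ i, 1 ≤ i → i ≤ N + 3 → ∀ j, 0 < (x i j)⁻¹ :=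
    fun hx i hi₁ hi₂ j => inv_pos.2 (hx i hi₁ hi₂ j)
  have hint : ∀ i, 1 ≤ i → i ≤ N + 1 → dH (w (i+1)) (w' (i+1)) ≤ E * δ := by
    intro i hi₁ hi₂
    rcases hi₂.lt_or_eq with hi₂ | rfl
    · rw [h.mid i hi₁ (by omega), h'.mid i hi₁ (by omega)]
      exact dH_sqrt_div_mulVec_le (hKT i) (hK _) (hv i hi₁ (by omega)) (hv' i hi₁ (by omega))
        (hinv hv (i+2) (by omega) (by omega)) (hinv hv' (i+2) (by omega) (by omega))
        (hET i hi₁ (by omega)) (hE (i+1) (by omega) (by omega)) (hδ i hi₁ (by omega))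
        ((dH_inv (hv (i+2) (by omega) (by omega)) (hv' (i+2) (by omega) (by omega))).trans_le
          (hδ (i+2) (by omega) (by omega)))
    · rw [h.penultimate, h'.penultimate]
      exact dH_sqrt_div_mulVec_le (hKT _) (hK _) (hv (N+1) hi₁ (by omega))
        (hv' (N+1) hi₁ (by omega)) (hv (N+3) (by omega) le_rfl) (hv' (N+3) (by omega) le_rfl)
        (hET (N+1) hi₁ (by omega)) (hE (N+2) (by omega) le_rfl) (hδ (N+1) hi₁ (by omega))
        (hδ (N+3) (by omega) le_rfl)
  refine forall_of_first_of_interior_of_last ?_ hint ?_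
  · rw [h.first, h'.first]
    exact (dH_div_mulVec_le (hK 1) ha (hinv hw 2 (by omega) (by omega))
      (hinv hw' 2 (by omega) (by omega))).trans ((dH_inv (hw 2 (by omega) (by omega))
        (hw' 2 (by omega) (by omega))).trans_le (hint 1 le_rfl (by omega)))
  · rw [h.last, h'.last]
    exact (dH_div_mulVec_le (hKT _) hb (hw (N+2) (by omega) (by omega))
      (hw' (N+2) (by omega) (by omega))).trans (hint (N+1) (by omega) le_rfl)

end SinkhornUpdate

section DualOptimality

variable {N : ℕ} {m : ℕ → ℕ} {C : ∀ i : ℕ, Matrix (Fin (m i)) (Fin (m (i+1))) ℝ}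
  {a : Fin (m 1) → ℝ} {b : Fin (m (N+3)) → ℝ} {ε : ℝ}

def dualGenDeriv (N : ℕ) (m : ℕ → ℕ) (C : ∀ i : ℕ, Matrix (Fin (m i)) (Fin (m (i+1))) ℝ)
    (a : Fin (m 1) → ℝ) (b : Fin (m (N+3)) → ℝ) (ε : ℝ) (f h : ∀ i : ℕ, Fin (m i) → ℝ) : ℝ :=
  (∑ j, h 1 j * a j) + (∑ k, h (N+3) k * b k)
    - ((∑ j, ∑ k, Real.exp ((f (N+2) j + f (N+3) k - C (N+2) j k) / ε)
          * (h (N+2) j + h (N+3) k))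
      + ∑ i ∈ Finset.Icc 1 (N+1), ∑ j, ∑ k,
          Real.exp ((f i j - f (i+1) k - C i j k) / ε) * (h i j - h (i+1) k))

lemma hasDerivAt_dualGen_line (hε : ε ≠ 0) (f h : ∀ i : ℕ, Fin (m i) → ℝ) :
    HasDerivAt (fun t : ℝ => dualGen N m C a b ε (f + t • h))
      (dualGenDeriv N m C a b ε f h) 0 := by
  have hline : ∀ x y : ℝ, HasDerivAt (fun t : ℝ => x + t * y) y 0 :=
    fun x y => (hasDerivAt_mul_const y).const_add x
  have hexp : ∀ {g : ℝ → ℝ} {g' : ℝ}, HasDerivAt g g' 0 →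
      HasDerivAt (fun t => Real.exp (g t / ε)) (Real.exp (g 0 / ε) * (g' / ε)) 0 :=
    fun hg => (hg.div_const ε).exp
  simp only [dualGen, Pi.add_apply, Pi.smul_apply, smul_eq_mul]
  refine (((HasDerivAt.fun_sum fun j _ => (hline _ _).mul_const _).add
    (HasDerivAt.fun_sum fun k _ => (hline _ _).mul_const _)).sub
    (((HasDerivAt.fun_sum fun j _ => HasDerivAt.fun_sum fun k _ =>
      hexp (((hline _ _).add (hline _ _)).sub_const _)).add
    (HasDerivAt.fun_sum fun i _ => HasDerivAt.fun_sum fun j _ => HasDerivAt.fun_sum fun k _ =>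
      hexp (((hline _ _).sub (hline _ _)).sub_const _))).const_mul ε)).congr_deriv ?_
  simp only [dualGenDeriv, Pi.add_apply, Pi.sub_apply, zero_mul, add_zero, Finset.mul_sum,
    mul_add]
  congr 1
  refine congrArg₂ _ (Finset.sum_congr rfl fun j _ => Finset.sum_congr rfl fun k _ => ?_)
    (Finset.sum_congr rfl fun i _ => Finset.sum_congr rfl fun j _ =>
      Finset.sum_congr rfl fun k _ => ?_) <;> field_simp

lemma dualGenDeriv_eq_zero_of_forall_le (hε : ε ≠ 0) {f : ∀ i : ℕ, Fin (m i) → ℝ}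
    (hmax : ∀ g, dualGen N m C a b ε g ≤ dualGen N m C a b ε f) (h : ∀ i : ℕ, Fin (m i) → ℝ) :
    dualGenDeriv N m C a b ε f h = 0 :=
  IsLocalMax.hasDerivAt_eq_zero
    (Filter.Eventually.of_forall fun t => by simpa using hmax (f + t • h))
    (hasDerivAt_dualGen_line hε f h)

lemma sum_sum_sum_mul_single {n : ℕ → ℕ} (s : Finset ℕ) (P : ∀ i, Fin (m i) → Fin (n i) → ℝ)
    (i₀ : ℕ) (j₀ : Fin (m i₀)) :
    ∑ i ∈ s, ∑ j, ∑ k, P i j k * (Pi.single i₀ (Pi.single j₀ 1) : ∀ i, Fin (m i) → ℝ) i j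
      = if i₀ ∈ s then ∑ k, P i₀ j₀ k else 0 := by
  split_ifs with hi₀
  · rw [Finset.sum_eq_single_of_mem i₀ hi₀ fun i _ hi => by simp [Pi.single_eq_of_ne hi]]
    simp [Pi.single_apply]
  · exact Finset.sum_eq_zero fun i hi => by
      simp [Pi.single_eq_of_ne (ne_of_mem_of_not_mem hi hi₀)]

lemma sum_sum_sum_mul_single_succ {n : ℕ → ℕ} (s : Finset ℕ)
    (P : ∀ i, Fin (n i) → Fin (m (i+1)) → ℝ) (i₀ : ℕ) (k₀ : Fin (m (i₀+1))) :
    ∑ i ∈ s, ∑ j, ∑ k, P i j k * (Pi.single (i₀+1) (Pi.single k₀ 1) : ∀ i, Fin (m i) → ℝ) (i+1) k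
      = if i₀ ∈ s then ∑ j, P i₀ j k₀ else 0 := by
  split_ifs with hi₀
  · rw [Finset.sum_eq_single_of_mem i₀ hi₀ fun i _ hi => by
      simp [Pi.single_eq_of_ne (show i + 1 ≠ i₀ + 1 by omega)]]
    simp [Pi.single_apply]
  · exact Finset.sum_eq_zero fun i hi => by
      simp [Pi.single_eq_of_ne (show i + 1 ≠ i₀ + 1 from
        fun h => hi₀ (Nat.succ_injective h ▸ hi))]

lemma dualGen_stationary (hε : ε ≠ 0) {f : ∀ i : ℕ, Fin (m i) → ℝ}
    (hmax : ∀ g, dualGen N m C a b ε g ≤ dualGen N m C a b ε f) :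
    (∀ j, a j = ∑ k, Real.exp ((f 1 j - f 2 k - C 1 j k) / ε)) ∧
    (∀ i, 1 ≤ i → i ≤ N → ∀ j, ∑ l, Real.exp ((f i l - f (i+1) j - C i l j) / ε)
      = ∑ k, Real.exp ((f (i+1) j - f (i+2) k - C (i+1) j k) / ε)) ∧
    (∀ j, ∑ l, Real.exp ((f (N+1) l - f (N+2) j - C (N+1) l j) / ε)
      = ∑ k, Real.exp ((f (N+2) j + f (N+3) k - C (N+2) j k) / ε)) ∧
    (∀ k, b k = ∑ j, Real.exp ((f (N+2) j + f (N+3) k - C (N+2) j k) / ε)) := by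
  have hcoord := fun i₀ (j₀ : Fin (m i₀)) =>
    dualGenDeriv_eq_zero_of_forall_le hε hmax (Pi.single i₀ (Pi.single j₀ 1))
  simp only [dualGenDeriv, mul_add, mul_sub, Finset.sum_add_distrib, Finset.sum_sub_distrib,
    sum_sum_sum_mul_single] at hcoord
  refine ⟨fun j => ?_, fun i hi hiN j => ?_, fun j => ?_, fun k => ?_⟩
  · have h := hcoord (0 + 1) j
    rw [sum_sum_sum_mul_single_succ] at h
    simpa [Pi.single_apply, sub_eq_zero] using h
  · have h := hcoord (i + 1) j
    rw [sum_sum_sum_mul_single_succ] at h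
    simpa (disch := omega) [Pi.single_eq_of_ne, hi, hiN, show i ≤ N + 1 by omega, sub_eq_zero]
      using h
  · have h := hcoord (N + 1 + 1) j
    rw [sum_sum_sum_mul_single_succ] at h
    simpa (disch := omega) [Pi.single_apply, Pi.single_eq_of_ne, ← sub_eq_add_neg, sub_eq_zero]
      using h
  · have h := hcoord (N + 2 + 1) k
    rw [sum_sum_sum_mul_single_succ] at h
    simpa (disch := omega) [Pi.single_apply, Pi.single_eq_of_ne, sub_eq_zero] using h

lemma exp_log_sub_log_div (hε : ε ≠ 0) {x y : ℝ} (hx : 0 < x) (hy : 0 < y) (c : ℝ) :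
    Real.exp ((ε * Real.log x - ε * Real.log y - c) / ε) = x * Real.exp (-c / ε) * y⁻¹ := by
  rw [show (ε * Real.log x - ε * Real.log y - c) / ε = Real.log x + -c / ε - Real.log y by
    field_simp; ring, Real.exp_sub, Real.exp_add, Real.exp_log hx, Real.exp_log hy, div_eq_mul_inv]

lemma exp_log_add_log_div (hε : ε ≠ 0) {x y : ℝ} (hx : 0 < x) (hy : 0 < y) (c : ℝ) :
    Real.exp ((ε * Real.log x + ε * Real.log y - c) / ε) = x * Real.exp (-c / ε) * y := by
  rw [show (ε * Real.log x + ε * Real.log y - c) / ε = Real.log x + -c / ε + Real.log y by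
    field_simp; ring, Real.exp_add, Real.exp_add, Real.exp_log hx, Real.exp_log hy]

variable {K : ∀ i : ℕ, Matrix (Fin (m i)) (Fin (m (i+1))) ℝ} {uhat : ∀ i : ℕ, Fin (m i) → ℝ}

lemma dual_optimal_marginals (hε : ε ≠ 0) (hK : ∀ i j k, K i j k = Real.exp (-C i j k / ε))
    (huhat : ∀ i : ℕ, 1 ≤ i → i ≤ N + 3 → ∀ j, 0 < uhat i j)
    (hopt : ∀ g : ∀ i : ℕ, Fin (m i) → ℝ,
      dualGen N m C a b ε g ≤ dualGen N m C a b ε (fun i j => ε * Real.log (uhat i j))) :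
    (∀ j, uhat 1 j * (K 1 *ᵥ fun k => (uhat 2 k)⁻¹) j = a j) ∧
    (∀ i, 1 ≤ i → i ≤ N → ∀ j, uhat (i+1) j * (K (i+1) *ᵥ fun k => (uhat (i+2) k)⁻¹) j
      = (uhat (i+1) j)⁻¹ * ((K i)ᵀ *ᵥ uhat i) j) ∧
    (∀ j, uhat (N+2) j * (K (N+2) *ᵥ uhat (N+3)) j
      = (uhat (N+2) j)⁻¹ * ((K (N+1))ᵀ *ᵥ uhat (N+1)) j) ∧
    (∀ k, uhat (N+3) k * ((K (N+2))ᵀ *ᵥ uhat (N+2)) k = b k) := by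
  have hsub : ∀ i, 1 ≤ i → i ≤ N + 2 → ∀ j k,
      Real.exp ((ε * Real.log (uhat i j) - ε * Real.log (uhat (i+1) k) - C i j k) / ε)
        = uhat i j * K i j k * (uhat (i+1) k)⁻¹ := fun i h₁ h₂ j k => by
    rw [exp_log_sub_log_div hε (huhat i h₁ (by omega) j) (huhat (i+1) (by omega) (by omega) k), hK]
  have hadd : ∀ j k,
      Real.exp ((ε * Real.log (uhat (N+2) j) + ε * Real.log (uhat (N+3) k) - C (N+2) j k) / ε)
        = uhat (N+2) j * K (N+2) j k * uhat (N+3) k := fun j k => by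
    rw [exp_log_add_log_div hε (huhat (N+2) (by omega) (by omega) j)
      (huhat (N+3) (by omega) le_rfl k), hK]
  obtain ⟨h₁, hmid, hM, hlast⟩ := dualGen_stationary hε hopt
  simp only [hadd, hsub 1 le_rfl (by omega), hsub (N+1) (by omega) (by omega)] at h₁ hM hlast
  simp only [mulVec, dotProduct, Finset.mul_sum, transpose_apply]
  refine ⟨fun j => ?_, fun i hi hiN j => ?_, fun j => ?_, fun k => ?_⟩
  · rw [h₁ j]
    exact Finset.sum_congr rfl fun k _ => by ring
  · have := hmid i hi hiN j
    simp only [hsub i hi (by omega), hsub (i+1) (by omega) (by omega)] at this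
    exact (Finset.sum_congr rfl fun k _ => by ring).trans
      (this.symm.trans (Finset.sum_congr rfl fun l _ => by ring))
  · exact (Finset.sum_congr rfl fun k _ => by ring).trans
      ((hM j).symm.trans (Finset.sum_congr rfl fun l _ => by ring))
  · rw [hlast k]
    exact Finset.sum_congr rfl fun j _ => by ring

lemma eq_sqrt_div_of_mul_eq_inv_mul {x R S : ℝ} (hx : 0 < x) (hR : 0 < R)
    (h : x * R = x⁻¹ * S) : x = √(S / R) := by
  rw [eq_comm, Real.sqrt_eq_iff_mul_self_eq_of_pos hx, eq_div_iff hR.ne']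
  field_simp at h
  linear_combination h

theorem isSinkhornUpdate_of_dual_optimal [∀ i, NeZero (m i)] (hε : ε ≠ 0)
    (hK : ∀ i j k, K i j k = Real.exp (-C i j k / ε))
    (huhat : ∀ i : ℕ, 1 ≤ i → i ≤ N + 3 → ∀ j, 0 < uhat i j)
    (hopt : ∀ g : ∀ i : ℕ, Fin (m i) → ℝ,
      dualGen N m C a b ε g ≤ dualGen N m C a b ε (fun i j => ε * Real.log (uhat i j))) :
    IsSinkhornUpdate N m K a b uhat uhat := by
  have hKpos : ∀ i j k, 0 < K i j k := fun i j k => hK i j k ▸ Real.exp_pos _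
  have hinv : ∀ i, 1 ≤ i → i ≤ N + 3 → ∀ j, 0 < (uhat i j)⁻¹ :=
    fun i h₁ h₂ j => inv_pos.2 (huhat i h₁ h₂ j)
  obtain ⟨h₁, hmid, hM, hlast⟩ := dual_optimal_marginals hε hK huhat hopt
  refine ⟨fun i hi hiN => funext fun j => ?_, funext fun j => ?_, funext fun j => ?_,
    funext fun k => ?_⟩
  · exact eq_sqrt_div_of_mul_eq_inv_mul (huhat (i+1) (by omega) (by omega) j)
      (mulVec_pos (hKpos (i+1)) (hinv (i+2) (by omega) (by omega)) j) (hmid i hi hiN j)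
  · exact eq_sqrt_div_of_mul_eq_inv_mul (huhat (N+2) (by omega) (by omega) j)
      (mulVec_pos (hKpos (N+2)) (huhat (N+3) (by omega) le_rfl) j) (hM j)
  · exact eq_div_of_mul_eq (mulVec_pos (hKpos 1) (hinv 2 (by omega) (by omega)) j).ne' (h₁ j)
  · exact eq_div_of_mul_eq (mulVec_pos (fun j k => hKpos (N+2) k j)
      (huhat (N+2) (by omega) (by omega)) k).ne' (hlast k)

end DualOptimality

/-- **Exponential convergence of the Sinkhorn iteration for general `M ≥ 2`**
(Thm. 3.8, with `M = N + 2`): for a dual-optimal tuple `(û⁽ⁱ⁾)`, one has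
`d_H(u^{n,i}, û⁽ⁱ⁾) ≤ Eⁿ·e` for every `n` and every `i = 1, …, M + 1`. -/
theorem sinkhorn_exponential_convergence_general
    (N : ℕ) (m : ℕ → ℕ) (hm : ∀ i, 0 < m i)
    (C : ∀ i : ℕ, Matrix (Fin (m i)) (Fin (m (i+1))) ℝ)
    (a : Fin (m 1) → ℝ) (b : Fin (m (N+3)) → ℝ)
    (ha : ∀ j, 0 < a j) (hb : ∀ k, 0 < b k)
    (ε : ℝ) (hε : 0 < ε)
    (K : ∀ i : ℕ, Matrix (Fin (m i)) (Fin (m (i+1))) ℝ)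
    (hK : ∀ i j k, K i j k = Real.exp (-C i j k / ε))
    (u : ℕ → ∀ i : ℕ, Fin (m i) → ℝ)
    (hu0 : ∀ i : ℕ, 1 ≤ i → i ≤ N + 3 → ∀ j, 0 < u 0 i j)
    (hrecMid : ∀ n : ℕ, ∀ i : ℕ, 1 ≤ i → i ≤ N →
      u (n+1) (i+1) = fun j => Real.sqrt (((K i)ᵀ *ᵥ u n i) j /
        (K (i+1) *ᵥ fun k => (u n (i+2) k)⁻¹) j))
    (hrecM : ∀ n : ℕ, u (n+1) (N+2) = fun j =>
      Real.sqrt (((K (N+1))ᵀ *ᵥ u n (N+1)) j / (K (N+2) *ᵥ u n (N+3)) j))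
    (hrecFirst : ∀ n : ℕ, u (n+1) 1 = fun j =>
      a j / (K 1 *ᵥ fun k => (u (n+1) 2 k)⁻¹) j)
    (hrecLast : ∀ n : ℕ, u (n+1) (N+3) = fun k =>
      b k / ((K (N+2))ᵀ *ᵥ u (n+1) (N+2)) k)
    (uhat : ∀ i : ℕ, Fin (m i) → ℝ)
    (huhat : ∀ i : ℕ, 1 ≤ i → i ≤ N + 3 → ∀ j, 0 < uhat i j)
    (hopt : ∀ g : ∀ i : ℕ, Fin (m i) → ℝ,
      dualGen N m C a b ε g ≤ dualGen N m C a b ε (fun i j => ε * Real.log (uhat i j)))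
    (E e : ℝ)
    (hE : E = (Finset.Icc 1 (N+2)).sup'
      (Finset.nonempty_Icc.mpr (by omega)) (fun i => birkhoffLambda (K i)))
    (he : e = (Finset.Icc 1 (N+3)).sup'
      (Finset.nonempty_Icc.mpr (by omega)) (fun i => dH (u 0 i) (uhat i))) :
    ∀ n : ℕ, ∀ i : ℕ, 1 ≤ i → i ≤ N + 3 →
      dH (u n i) (uhat i) ≤ E ^ n * e := by
  have : ∀ i, NeZero (m i) := fun i => ⟨(hm i).ne'⟩
  have hKpos : ∀ i j k, 0 < K i j k := fun i j k => hK i j k ▸ Real.exp_pos _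
  have hstep : ∀ n, IsSinkhornUpdate N m K a b (u n) (u (n+1)) :=
    fun n => ⟨hrecMid n, hrecM n, hrecFirst n, hrecLast n⟩
  have hfix := isSinkhornUpdate_of_dual_optimal hε.ne' hK huhat hopt
  have hpos : ∀ n i, 1 ≤ i → i ≤ N + 3 → ∀ j, 0 < u n i j := by
    intro n
    induction n with
    | zero => exact hu0
    | succ n ih => exact (hstep n).pos ha hb hKpos ih
  have hlam : ∀ i, 1 ≤ i → i ≤ N + 2 → birkhoffLambda (K i) ≤ E := fun i h₁ h₂ =>
    hE ▸ Finset.le_sup' (fun i => birkhoffLambda (K i)) (Finset.mem_Icc.2 ⟨h₁, h₂⟩)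
  intro n
  induction n with
  | zero =>
    intro i h₁ h₂
    rw [pow_zero, one_mul, he]
    exact Finset.le_sup' (fun i => dH (u 0 i) (uhat i)) (Finset.mem_Icc.2 ⟨h₁, h₂⟩)
  | succ n ih =>
    rw [pow_succ', mul_assoc]
    exact (hstep n).dH_le hfix ha hb hKpos (hpos n) huhat hlam ih
end
end

section
/- With the fixed initial vectors, for every n ∈ ℕ the induced matrices satisfy Σ_{j≤m1,k≤m2} P^(n,1)_{jk} = 1 and Σ_{k≤m2,l≤m3} P^(n,2)_{kl} = 1; moreover, for every n ≥ 1, P^(n,1)1_{m2} = a and (P^(n,2))ᵀ1_{m2} = b. -/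
/-!
Each half-step of the iteration rescales one side so that the corresponding marginal of the
induced matrix is exactly `a` (resp. `b`); as these are probability vectors, the total mass is
then `1`. At `n = 0` the normalisation by `‖K‖₁` gives mass `1` directly. Positivity of the
kernels propagates to all iterates, so no denominator vanishes.
-/

open Matrix Finset Real

noncomputable section

/-- The dual (Lagrangian) function for the sequentially composed OT problem with `M = 2`. -/
def dual2 {m1 m2 m3 : ℕ} (a : Fin m1 → ℝ) (b : Fin m3 → ℝ) (ε : ℝ)
    (C1 : Matrix (Fin m1) (Fin m2) ℝ) (C2 : Matrix (Fin m2) (Fin m3) ℝ)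
    (f1 : Fin m1 → ℝ) (f2 : Fin m2 → ℝ) (f3 : Fin m3 → ℝ) : ℝ :=
  (∑ j, f1 j * a j) + (∑ l, f3 l * b l)
    - ε * ((∑ j, ∑ k, Real.exp ((f1 j - f2 k - C1 j k) / ε))
      + ∑ k, ∑ l, Real.exp ((f2 k + f3 l - C2 k l) / ε))

/-- The matrix `diag(u) K diag(1/v)` induced by the first pair of Sinkhorn vectors. -/
def indMat1 {m1 m2 : ℕ} (u : Fin m1 → ℝ) (K : Matrix (Fin m1) (Fin m2) ℝ)
    (v : Fin m2 → ℝ) : Matrix (Fin m1) (Fin m2) ℝ :=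
  Matrix.diagonal u * K * Matrix.diagonal (fun k => (v k)⁻¹)

/-- The matrix `diag(v) K diag(w)` induced by the second pair of Sinkhorn vectors. -/
def indMat2 {m2 m3 : ℕ} (v : Fin m2 → ℝ) (K : Matrix (Fin m2) (Fin m3) ℝ)
    (w : Fin m3 → ℝ) : Matrix (Fin m2) (Fin m3) ℝ :=
  Matrix.diagonal v * K * Matrix.diagonal w

section

variable {ι κ α : Type*}

lemma Matrix.mulVec_pos_of_pos [Fintype κ] [Nonempty κ] {K : Matrix ι κ ℝ}
    (hK : ∀ i j, 0 < K i j) {v : κ → ℝ} (hv : ∀ j, 0 < v j) (i : ι) : 0 < (K *ᵥ v) i :=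
  sum_pos (fun j _ => mul_pos (hK i j) (hv j)) univ_nonempty

lemma Matrix.sum_sum_pos_of_pos [Fintype ι] [Fintype κ] [Nonempty ι] [Nonempty κ]
    {K : Matrix ι κ ℝ} (hK : ∀ i j, 0 < K i j) : 0 < ∑ i, ∑ j, K i j :=
  sum_pos (fun i _ => sum_pos (fun j _ => hK i j) univ_nonempty) univ_nonempty

lemma Matrix.sum_sum_eq_sum_mulVec_one [Fintype ι] [Fintype κ] [NonAssocSemiring α]
    (M : Matrix ι κ α) : ∑ i, ∑ j, M i j = ∑ i, (M *ᵥ fun _ => 1) i := by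
  simp [mulVec, dotProduct]

lemma Matrix.sum_sum_eq_sum_transpose_mulVec_one [Fintype ι] [Fintype κ] [NonAssocSemiring α]
    (M : Matrix ι κ α) : ∑ i, ∑ j, M i j = ∑ j, (Mᵀ *ᵥ fun _ => 1) j :=
  Finset.sum_comm.trans (by simp [mulVec, dotProduct])

end

section

variable {m1 m2 m3 : ℕ}

lemma indMat1_apply (u : Fin m1 → ℝ) (K : Matrix (Fin m1) (Fin m2) ℝ) (v : Fin m2 → ℝ)
    (j : Fin m1) (k : Fin m2) : indMat1 u K v j k = u j * K j k * (v k)⁻¹ := by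
  simp [indMat1, mul_diagonal, diagonal_mul]

lemma indMat2_apply (v : Fin m2 → ℝ) (K : Matrix (Fin m2) (Fin m3) ℝ) (w : Fin m3 → ℝ)
    (k : Fin m2) (l : Fin m3) : indMat2 v K w k l = v k * K k l * w l := by
  simp [indMat2, mul_diagonal, diagonal_mul]

lemma indMat1_mulVec_one (u : Fin m1 → ℝ) (K : Matrix (Fin m1) (Fin m2) ℝ)
    (v : Fin m2 → ℝ) (j : Fin m1) :
    (indMat1 u K v *ᵥ fun _ => 1) j = u j * (K *ᵥ fun k => (v k)⁻¹) j := by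
  simp [mulVec, dotProduct, indMat1_apply, mul_sum, mul_assoc]

lemma indMat2_transpose_mulVec_one (v : Fin m2 → ℝ) (K : Matrix (Fin m2) (Fin m3) ℝ)
    (w : Fin m3 → ℝ) (l : Fin m3) :
    ((indMat2 v K w)ᵀ *ᵥ fun _ => 1) l = w l * (Kᵀ *ᵥ v) l := by
  simp [mulVec, dotProduct, indMat2_apply, mul_sum, mul_comm, mul_left_comm]

lemma indMat1_mulVec_one_of_eq_div {a u : Fin m1 → ℝ} {K : Matrix (Fin m1) (Fin m2) ℝ}
    {v : Fin m2 → ℝ} (hu : u = fun j => a j / (K *ᵥ fun k => (v k)⁻¹) j)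
    (hden : ∀ j, (K *ᵥ fun k => (v k)⁻¹) j ≠ 0) : (indMat1 u K v *ᵥ fun _ => 1) = a := by
  funext j
  rw [indMat1_mulVec_one, hu]
  exact div_mul_cancel₀ _ (hden j)

lemma indMat2_transpose_mulVec_one_of_eq_div {b w : Fin m3 → ℝ}
    {K : Matrix (Fin m2) (Fin m3) ℝ} {v : Fin m2 → ℝ}
    (hw : w = fun l => b l / (Kᵀ *ᵥ v) l) (hden : ∀ l, (Kᵀ *ᵥ v) l ≠ 0) :
    ((indMat2 v K w)ᵀ *ᵥ fun _ => 1) = b := by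
  funext l
  rw [indMat2_transpose_mulVec_one, hw]
  exact div_mul_cancel₀ _ (hden l)

lemma sum_indMat1_const_one (c : ℝ) (K : Matrix (Fin m1) (Fin m2) ℝ) :
    ∑ j, ∑ k, indMat1 (fun _ => c) K (fun _ => 1) j k = c * ∑ j, ∑ k, K j k := by
  simp [indMat1_apply, mul_sum]

lemma sum_indMat2_one_const (c : ℝ) (K : Matrix (Fin m2) (Fin m3) ℝ) :
    ∑ k, ∑ l, indMat2 (fun _ => 1) K (fun _ => c) k l = c * ∑ k, ∑ l, K k l := by
  simp [indMat2_apply, mul_sum, mul_comm]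

lemma sinkhorn_iterates_pos [Nonempty (Fin m1)] [Nonempty (Fin m2)] [Nonempty (Fin m3)]
    {K1 : Matrix (Fin m1) (Fin m2) ℝ} {K2 : Matrix (Fin m2) (Fin m3) ℝ}
    (hK1 : ∀ j k, 0 < K1 j k) (hK2 : ∀ k l, 0 < K2 k l)
    {a : Fin m1 → ℝ} {b : Fin m3 → ℝ} (ha : ∀ j, 0 < a j) (hb : ∀ l, 0 < b l)
    {u1 : ℕ → Fin m1 → ℝ} {u2 : ℕ → Fin m2 → ℝ} {u3 : ℕ → Fin m3 → ℝ}
    (hu1 : ∀ j, 0 < u1 0 j) (hu3 : ∀ l, 0 < u3 0 l)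
    (hrec2 : ∀ n, u2 (n+1) = fun k => Real.sqrt ((K1ᵀ *ᵥ u1 n) k / (K2 *ᵥ u3 n) k))
    (hrec1 : ∀ n, u1 (n+1) = fun j => a j / (K1 *ᵥ fun k => (u2 (n+1) k)⁻¹) j)
    (hrec3 : ∀ n, u3 (n+1) = fun l => b l / (K2ᵀ *ᵥ u2 (n+1)) l) (n : ℕ) :
    (∀ j, 0 < u1 n j) ∧ (∀ l, 0 < u3 n l) ∧ ∀ k, 0 < u2 (n + 1) k := by
  have hu2 {n} (h1 : ∀ j, 0 < u1 n j) (h3 : ∀ l, 0 < u3 n l) (k : Fin m2) :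
      0 < u2 (n + 1) k := by
    rw [hrec2]
    exact sqrt_pos.mpr (div_pos (mulVec_pos_of_pos (fun k j => hK1 j k) h1 k)
      (mulVec_pos_of_pos hK2 h3 k))
  induction n with
  | zero => exact ⟨hu1, hu3, hu2 hu1 hu3⟩
  | succ n ih =>
    obtain ⟨-, -, hu2n⟩ := ih
    have hu1' : ∀ j, 0 < u1 (n + 1) j := fun j => by
      rw [hrec1]
      exact div_pos (ha j) (mulVec_pos_of_pos hK1 (fun k => inv_pos.mpr (hu2n k)) j)
    have hu3' : ∀ l, 0 < u3 (n + 1) l := fun l => by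
      rw [hrec3]
      exact div_pos (hb l) (mulVec_pos_of_pos (fun l k => hK2 k l) hu2n l)
    exact ⟨hu1', hu3', hu2 hu1' hu3'⟩

end

theorem sinkhorn_induced_matrices_normalized_general
    {m1 m2 m3 : ℕ} (hm1 : 0 < m1) (hm2 : 0 < m2) (hm3 : 0 < m3)
    (C1 : Matrix (Fin m1) (Fin m2) ℝ) (C2 : Matrix (Fin m2) (Fin m3) ℝ)
    (a : Fin m1 → ℝ) (b : Fin m3 → ℝ)
    (ha : ∀ j, 0 < a j) (hb : ∀ l, 0 < b l)
    (hasum : ∑ j, a j = 1) (hbsum : ∑ l, b l = 1)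
    (ε : ℝ)
    (K1 : Matrix (Fin m1) (Fin m2) ℝ) (K2 : Matrix (Fin m2) (Fin m3) ℝ)
    (hK1 : ∀ j k, K1 j k = Real.exp (-C1 j k / ε))
    (hK2 : ∀ k l, K2 k l = Real.exp (-C2 k l / ε))
    (u1 : ℕ → Fin m1 → ℝ) (u2 : ℕ → Fin m2 → ℝ) (u3 : ℕ → Fin m3 → ℝ)
    (hinit1 : u1 0 = fun _ => 1 / (∑ j, ∑ k, K1 j k))
    (hinit2 : u2 0 = fun _ => 1)
    (hinit3 : u3 0 = fun _ => 1 / (∑ k, ∑ l, K2 k l))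
    (hrec2 : ∀ n, u2 (n+1) = fun k => Real.sqrt ((K1ᵀ *ᵥ u1 n) k / (K2 *ᵥ u3 n) k))
    (hrec1 : ∀ n, u1 (n+1) = fun j => a j / (K1 *ᵥ fun k => (u2 (n+1) k)⁻¹) j)
    (hrec3 : ∀ n, u3 (n+1) = fun l => b l / (K2ᵀ *ᵥ u2 (n+1)) l) :
    (∀ n : ℕ,
      (∑ j, ∑ k, indMat1 (u1 n) K1 (u2 n) j k) = 1 ∧
      (∑ k, ∑ l, indMat2 (u2 n) K2 (u3 n) k l) = 1) ∧
    (∀ n : ℕ, 1 ≤ n →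
      (indMat1 (u1 n) K1 (u2 n) *ᵥ fun _ => 1) = a ∧
      ((indMat2 (u2 n) K2 (u3 n))ᵀ *ᵥ fun _ => 1) = b) := by
  have : Nonempty (Fin m1) := Fin.pos_iff_nonempty.mp hm1
  have : Nonempty (Fin m2) := Fin.pos_iff_nonempty.mp hm2
  have : Nonempty (Fin m3) := Fin.pos_iff_nonempty.mp hm3
  have hK1pos : ∀ j k, 0 < K1 j k := fun j k => hK1 j k ▸ exp_pos _
  have hK2pos : ∀ k l, 0 < K2 k l := fun k l => hK2 k l ▸ exp_pos _
  have hS1 := sum_sum_pos_of_pos hK1pos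
  have hS2 := sum_sum_pos_of_pos hK2pos
  have hpos := sinkhorn_iterates_pos hK1pos hK2pos ha hb
    (by simp [hinit1, hS1]) (by simp [hinit3, hS2]) hrec2 hrec1 hrec3
  have hmarg (n : ℕ) : (indMat1 (u1 (n + 1)) K1 (u2 (n + 1)) *ᵥ fun _ => 1) = a ∧
      ((indMat2 (u2 (n + 1)) K2 (u3 (n + 1)))ᵀ *ᵥ fun _ => 1) = b :=
    ⟨indMat1_mulVec_one_of_eq_div (hrec1 n) fun j =>
      (mulVec_pos_of_pos hK1pos (fun k => inv_pos.mpr ((hpos n).2.2 k)) j).ne',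
    indMat2_transpose_mulVec_one_of_eq_div (hrec3 n) fun l =>
      (mulVec_pos_of_pos (fun l k => hK2pos k l) (hpos n).2.2 l).ne'⟩
  refine ⟨fun n => ?_, fun n hn => ?_⟩
  · cases n with
    | zero =>
      rw [hinit1, hinit2, hinit3, sum_indMat1_const_one, sum_indMat2_one_const,
        one_div_mul_cancel hS1.ne', one_div_mul_cancel hS2.ne']
      exact ⟨rfl, rfl⟩
    | succ n =>
      rw [sum_sum_eq_sum_mulVec_one, (hmarg n).1, sum_sum_eq_sum_transpose_mulVec_one,
        (hmarg n).2]
      exact ⟨hasum, hbsum⟩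
  · obtain ⟨n, rfl⟩ := Nat.exists_eq_add_of_le' hn
    exact hmarg n

/-- **Normalization of the induced matrices** (Lem. 4.1): with the fixed initial vectors,
the entries of `P^{n,1}` and `P^{n,2}` each sum to `1` for all `n`, and their edge
marginals are exactly `a` and `b` for all `n ≥ 1`. -/
theorem sinkhorn_induced_matrices_normalized
    {m1 m2 m3 : ℕ} (hm1 : 0 < m1) (hm2 : 0 < m2) (hm3 : 0 < m3)
    (C1 : Matrix (Fin m1) (Fin m2) ℝ) (C2 : Matrix (Fin m2) (Fin m3) ℝ)
    (hC1 : ∀ j k, 0 ≤ C1 j k) (hC2 : ∀ k l, 0 ≤ C2 k l)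
    (a : Fin m1 → ℝ) (b : Fin m3 → ℝ)
    (ha : ∀ j, 0 < a j) (hb : ∀ l, 0 < b l)
    (hasum : ∑ j, a j = 1) (hbsum : ∑ l, b l = 1)
    (ε : ℝ) (hε : 0 < ε)
    (K1 : Matrix (Fin m1) (Fin m2) ℝ) (K2 : Matrix (Fin m2) (Fin m3) ℝ)
    (hK1 : ∀ j k, K1 j k = Real.exp (-C1 j k / ε))
    (hK2 : ∀ k l, K2 k l = Real.exp (-C2 k l / ε))
    (u1 : ℕ → Fin m1 → ℝ) (u2 : ℕ → Fin m2 → ℝ) (u3 : ℕ → Fin m3 → ℝ)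
    (hinit1 : u1 0 = fun _ => 1 / (∑ j, ∑ k, K1 j k))
    (hinit2 : u2 0 = fun _ => 1)
    (hinit3 : u3 0 = fun _ => 1 / (∑ k, ∑ l, K2 k l))
    (hrec2 : ∀ n, u2 (n+1) = fun k => Real.sqrt ((K1ᵀ *ᵥ u1 n) k / (K2 *ᵥ u3 n) k))
    (hrec1 : ∀ n, u1 (n+1) = fun j => a j / (K1 *ᵥ fun k => (u2 (n+1) k)⁻¹) j)
    (hrec3 : ∀ n, u3 (n+1) = fun l => b l / (K2ᵀ *ᵥ u2 (n+1)) l) :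
    (∀ n : ℕ,
      (∑ j, ∑ k, indMat1 (u1 n) K1 (u2 n) j k) = 1 ∧
      (∑ k, ∑ l, indMat2 (u2 n) K2 (u3 n) k l) = 1) ∧
    (∀ n : ℕ, 1 ≤ n →
      (indMat1 (u1 n) K1 (u2 n) *ᵥ fun _ => 1) = a ∧
      ((indMat2 (u2 n) K2 (u3 n))ᵀ *ᵥ fun _ => 1) = b) :=
  sinkhorn_induced_matrices_normalized_general hm1 hm2 hm3 C1 C2 a b ha hb hasum hbsum ε K1 K2 hK1
    hK2 u1 u2 u3 hinit1 hinit2 hinit3 hrec2 hrec1 hrec3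
end
end
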